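/- For all 1 ≤ m ≤ n, the polynomial ∑_{j=0}^{m-1} C(m-1,j) C(n-1,j) x^j satisfies the recurrence ∑_{j=0}^{m-1} C(m-1,j) C(n-1,j) x^j = ∑_{k=1}^{n} (-1)^{k-1} C(n,k) · E(m, n-k)(x), where E(m, r)(x) = ∑_{j=0}^{m-1} C(m-1,j) C(r-1,j) x^j for r ≥ 1 and E(m,0)(x) = (1-x)^{m-1}. -/

import Mathlib

/-!
Write `E(m, r) = P(r - 1)` with `P(x) = ∑_j C(m-1,j) C(x,j) X^j`, where `C(x,j)` is the binomial
coefficient of an integer `x` (`Ring.choose`); the convention `E(m,0) = (1-x)^(m-1)` is exactly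
`C(-1,j) = (-1)^j`. By Pascal's rule `x ↦ C(x,j)` has vanishing `(j+1)`-st forward difference,
so for `m ≤ n` the `n`-th forward difference of `P` vanishes. Expanding it at `-1` as the
alternating binomial sum of `P(-1), …, P(n-1)` and solving for `P(n-1)` gives the recurrence.
-/

open Polynomial

/-- The closed-form polynomial `E m r = ∑_{j=0}^{m-1} C(m-1,j) C(r-1,j) x^j` for
`r ≥ 1`, with `E m 0 = (1-x)^(m-1)`. -/
noncomputable def Epoly (m r : ℕ) : Polynomial ℤ :=
  if r = 0 then (1 - X) ^ (m - 1)
  else ∑ j ∈ Finset.range m, C (((m - 1).choose j : ℤ) * ((r - 1).choose j : ℤ)) * X ^ j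

open Finset Function fwdDiff

theorem fwdDiff_iter_smul_const {M G R : Type*} [AddCommMonoid M] [AddCommGroup G] [Ring R]
    [Module R G] (h : M) (f : M → R) (g : G) (n : ℕ) :
    (Δ_[h])^[n] (fun y ↦ f y • g) = fun y ↦ (Δ_[h])^[n] f y • g := by
  induction n with
  | zero => rfl
  | succ n ih =>
    rw [iterate_succ_apply', ih, fwdDiff_smul_const, iterate_succ_apply']
    rfl

theorem eq_sum_Icc_of_fwdDiff_iter_eq_zero {M G : Type*} [AddCommMonoid M] [AddCommGroup G]
    (h y : M) (f : M → G) {n : ℕ} (hf : (Δ_[h])^[n] f y = 0) :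
    f (y + n • h) = ∑ k ∈ Icc 1 n, ((-1) ^ (k - 1) * n.choose k : ℤ) • f (y + (n - k) • h) := by
  rw [fwdDiff_iter_eq_sum_shift, ← sum_range_reflect, sum_range_eq_add_Ico _ (Nat.add_one_pos n),
    Ico_add_one_right_eq_Icc] at hf
  simp only [Nat.add_sub_cancel] at hf
  have hneg : ∀ k ∈ Icc 1 n, ((-1) ^ (n - (n - k)) * n.choose (n - k) : ℤ) • f (y + (n - k) • h)
      = -(((-1) ^ (k - 1) * n.choose k : ℤ) • f (y + (n - k) • h)) := by
    intro k hk
    obtain ⟨hk1, hkn⟩ := mem_Icc.mp hk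
    obtain ⟨k, rfl⟩ := Nat.exists_eq_add_of_le' hk1
    rw [Nat.sub_sub_self hkn, Nat.choose_symm hkn, Nat.add_sub_cancel, pow_succ, ← neg_smul]
    ring_nf
  rw [sum_congr rfl hneg, sum_neg_distrib] at hf
  simpa [sub_eq_zero, ← sub_eq_add_neg] using hf

section BinomialRing

variable {R : Type*} [CommRing R] [BinomialRing R]

theorem Ring.choose_neg_one (j : ℕ) : Ring.choose (-1 : R) j = (-1) ^ j := by
  induction j with
  | zero => rw [Ring.choose_zero_right, pow_zero]
  | succ j ih =>
    have pascal := Ring.choose_succ_succ (-1 : R) j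
    rw [neg_add_cancel, Ring.choose_zero_succ, ih] at pascal
    rw [pow_succ]
    linear_combination -pascal

theorem fwdDiff_ringChoose (j : ℕ) :
    Δ_[1] (fun x : R ↦ Ring.choose x (j + 1)) = fun x ↦ Ring.choose x j := by
  ext x
  rw [fwdDiff, Ring.choose_succ_succ, add_sub_cancel_right]

theorem fwdDiff_iter_ringChoose (j k : ℕ) :
    (Δ_[1])^[k] (fun x : R ↦ Ring.choose x (k + j)) = fun x ↦ Ring.choose x j := by
  induction k generalizing j with
  | zero => simp
  | succ k ih => rw [iterate_succ_apply, add_right_comm, fwdDiff_ringChoose, ih]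

theorem fwdDiff_iter_ringChoose_eq_zero {j n : ℕ} (hjn : j < n) :
    (Δ_[1])^[n] (fun x : R ↦ Ring.choose x j) = 0 := by
  obtain ⟨k, rfl⟩ := Nat.exists_eq_add_of_lt hjn
  have hconst : (Δ_[1])^[j] (fun x : R ↦ Ring.choose x j) = fun _ ↦ 1 := by
    simpa [Ring.choose_zero_right] using fwdDiff_iter_ringChoose (R := R) 0 j
  rw [show j + k + 1 = k + (j + 1) by ring, iterate_add_apply, iterate_succ_apply', hconst,
    fwdDiff_const]
  exact iterate_fixed (fwdDiff_const 1 0) k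

end BinomialRing

noncomputable def choosePoly (m : ℕ) (x : ℤ) : ℤ[X] :=
  ∑ j ∈ range m, Ring.choose x j • monomial j ((m - 1).choose j : ℤ)

theorem fwdDiff_iter_choosePoly_eq_zero {m n : ℕ} (hmn : m ≤ n) :
    (Δ_[1])^[n] (choosePoly m) = 0 := by
  have hsum : choosePoly m =
      ∑ j ∈ range m, fun x ↦ Ring.choose x j • monomial j ((m - 1).choose j : ℤ) := by
    ext1 x
    rw [choosePoly, Finset.sum_apply]
  rw [hsum, fwdDiff_iter_finsetSum]
  refine sum_eq_zero fun j hj ↦ ?_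
  rw [fwdDiff_iter_smul_const, fwdDiff_iter_ringChoose_eq_zero ((mem_range.mp hj).trans_le hmn)]
  exact funext fun _ ↦ zero_smul ℤ _

theorem Epoly_eq_choosePoly {m : ℕ} (hm : 1 ≤ m) (r : ℕ) :
    Epoly m r = choosePoly m ((r : ℤ) - 1) := by
  rcases r with _ | r
  · obtain ⟨m, rfl⟩ : ∃ k, m = k + 1 := ⟨m - 1, by omega⟩
    rw [Epoly, if_pos rfl, choosePoly, Nat.add_sub_cancel, sub_eq_neg_add, add_pow,
      Nat.cast_zero, zero_sub]
    refine sum_congr rfl fun j _ ↦ ?_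
    rw [Ring.choose_neg_one, ← C_mul_X_pow_eq_monomial, one_pow, mul_one, neg_pow, ← C_eq_natCast,
      smul_eq_C_mul]
    simp only [map_pow, map_neg, map_one]
    ring
  · rw [Epoly, if_neg r.succ_ne_zero, choosePoly, Nat.add_sub_cancel, Nat.cast_succ,
      add_sub_cancel_right]
    refine sum_congr rfl fun j _ ↦ ?_
    rw [Ring.choose_natCast, ← C_mul_X_pow_eq_monomial, C_mul, smul_eq_C_mul]
    ring

/-- For all `1 ≤ m ≤ n`, the polynomial `∑_{j=0}^{m-1} C(m-1,j) C(n-1,j) x^j`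
satisfies the recurrence
`∑_j C(m-1,j) C(n-1,j) x^j = ∑_{k=1}^{n} (-1)^{k-1} C(n,k) E(m, n-k)(x)`. -/
theorem stmt_2 (m n : ℕ) (hm : 1 ≤ m) (hmn : m ≤ n) :
    ∑ j ∈ Finset.range m, C (((m - 1).choose j : ℤ) * ((n - 1).choose j : ℤ)) * X ^ j
      = ∑ k ∈ Finset.Icc 1 n,
          C ((-1 : ℤ) ^ (k - 1) * (n.choose k : ℤ)) * Epoly m (n - k) := by
  have key := eq_sum_Icc_of_fwdDiff_iter_eq_zero 1 (-1) (choosePoly m)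
    (congr_fun (fwdDiff_iter_choosePoly_eq_zero hmn) (-1))
  calc _ = Epoly m n := by rw [Epoly, if_neg (by omega)]
    _ = _ := by
      simp_rw [C_mul', Epoly_eq_choosePoly hm]
      simpa only [nsmul_eq_mul, mul_one, sub_eq_neg_add] using key
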